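/- arXiv:1604.02617 — 3 statements merged into one kernel-verified Lean document; each statement's English description precedes it below -/
import Mathlib

section
/- Let Q be a real d×d matrix, λ ∈ ℝ^d, n ∈ ℕ. Let A be the (n+1)×(n+1) matrix with A_{ii} = −(n−i), A_{i+1,i} = n−i, other entries zero, and let 𝐐 = A ⊗ diag(λ) + I_{n+1} ⊗ Q. Then for every s ∈ ℝ, every x ∈ ℝ^d and all indices 0 ≤ j ≤ k ≤ n, (e_kᵀ ⊗ I_d) · exp(s𝐐) · (e_j ⊗ x) = C(n−j, k−j) · ∑_{i=j}^{k} (−1)^{k−i} C(k−j, k−i) · exp(s(Q − (n−i)·diag(λ))) · x, while for k < j the left-hand side is the zero vector. -/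
/-!
The matrix `A` is lower bidiagonal with distinct diagonal entries `-(n - i)`, and it is
diagonalised by the signed binomial matrix `V k i = (-1)^(k-i) C(n-i, k-i)`, whose inverse is
`W i j = C(n-j, i-j)`. Conjugating `𝐐 = A ⊗ diag λ + I ⊗ Q` by `V ⊗ I` gives the block-diagonal
matrix with blocks `Q - (n-i) diag λ`, so
`exp(s𝐐) = (V ⊗ I) · blockdiag (exp (s (Q - (n-i) diag λ))) · (W ⊗ I)`.
Block `k` of `exp(s𝐐) (e_j ⊗ x)` is therefore `∑ᵢ V k i W i j exp(s(Q - (n-i) diag λ)) x`, and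
`V k i W i j = C(n-j, k-j) (-1)^(k-i) C(k-j, k-i)` for `j ≤ i ≤ k` (and `0` otherwise) by the
identity `C(N, K) C(K, S) = C(N, S) C(N-S, K-S)`. The same computation with `exp` replaced by the
identity shows `V W = 1`, the inner sum being the alternating binomial sum `(1 - 1)^(k-j)`.
-/

open Kronecker NormedSpace Matrix Finset

theorem sum_Icc_neg_one_pow_mul_choose {R : Type*} [CommRing R] (j k : ℕ) :
    ∑ i ∈ Icc j k, (-1 : R) ^ (k - i) * ((k - j).choose (k - i) : R) = if j = k then 1 else 0 := by
  rcases lt_or_ge k j with hkj | hjk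
  · rw [Icc_eq_empty_of_lt hkj, sum_empty, if_neg hkj.ne']
  have hreflect : ∑ i ∈ Icc j k, (-1 : R) ^ (k - i) * ((k - j).choose (k - i) : R) =
      ∑ t ∈ range (k - j + 1), (-1 : R) ^ t * ((k - j).choose t : R) := by
    rw [← Ico_add_one_right_eq_Icc,
      sum_Ico_reflect (fun t => (-1 : R) ^ t * ((k - j).choose t : R)) j le_rfl,
      range_eq_Ico, Nat.sub_self, show k + 1 - j = k - j + 1 by omega]
  have hbinom := add_pow (-1 : R) 1 (k - j)
  simp only [neg_add_cancel, one_pow, mul_one] at hbinom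
  rw [hreflect, ← hbinom, zero_pow_eq]
  exact if_congr (by omega) rfl rfl

theorem sub_mul_choose_recurrence {n i j : ℕ} (hi : i ≤ n) :
    (n - j) * (if j + 1 ≤ i then (n - (j + 1)).choose (i - (j + 1)) else 0) +
        (n - i) * (if j ≤ i then (n - j).choose (i - j) else 0) =
      (n - j) * (if j ≤ i then (n - j).choose (i - j) else 0) := by
  rcases lt_trichotomy j i with hji | rfl | hji
  · obtain ⟨m, N, rfl, rfl⟩ : ∃ m N, i = j + 1 + m ∧ n = j + 1 + m + N :=
      ⟨i - (j + 1), n - i, by omega, by omega⟩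
    rw [if_pos (show j + 1 ≤ j + 1 + m by omega), if_pos (show j ≤ j + 1 + m by omega),
      show j + 1 + m + N - j = m + N + 1 by omega,
      show j + 1 + m - j = m + 1 by omega, show j + 1 + m + N - (j + 1) = m + N by omega,
      show j + 1 + m - (j + 1) = m by omega, show j + 1 + m + N - (j + 1 + m) = N by omega,
      Nat.add_one_mul_choose_eq]
    ring
  · simp
  · simp [show ¬ j ≤ i by omega, show ¬ j + 1 ≤ i by omega]

section DeathGenerator

variable (R : Type*) [CommRing R] (n : ℕ)

/-- Transposed generator of the chain on `{0, …, n}` that jumps from `i` to `i + 1` at rate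
`n - i` (the number of deaths among `n` individuals dying independently at rate `1`). -/
def deathGenerator : Matrix (Fin (n + 1)) (Fin (n + 1)) R :=
  of fun i j =>
    if i = j then -((n - i : ℕ) : R) else if (i : ℕ) = j + 1 then ((n - j : ℕ) : R) else 0

def deathEigenvectors : Matrix (Fin (n + 1)) (Fin (n + 1)) R :=
  of fun i j => if (j : ℕ) ≤ i then (-1) ^ ((i : ℕ) - j) * ((n - j).choose (i - j) : R) else 0

def deathEigenvectorsInv : Matrix (Fin (n + 1)) (Fin (n + 1)) R :=
  of fun i j => if (j : ℕ) ≤ i then ((n - j).choose (i - j) : R) else 0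

variable {R n}

theorem deathEigenvectors_mul_deathEigenvectorsInv_apply (i j k : Fin (n + 1)) :
    deathEigenvectors R n k i * deathEigenvectorsInv R n i j =
      if (i : ℕ) ∈ Icc (j : ℕ) k then
        ((n - j).choose (k - j) : R) * ((-1) ^ ((k : ℕ) - i) * ((k - j : ℕ).choose (k - i) : R))
      else 0 := by
  simp only [deathEigenvectors, deathEigenvectorsInv, of_apply, mem_Icc]
  by_cases hmem : (j : ℕ) ≤ i ∧ (i : ℕ) ≤ k
  · obtain ⟨hji, hik⟩ := hmem
    rw [if_pos hik, if_pos hji, if_pos ⟨hji, hik⟩]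
    have h := Nat.choose_mul (n := n - j) (k := k - j) (s := i - j) (by omega)
    rw [show n - j - (i - j) = n - i by omega, show (k : ℕ) - j - (i - j) = k - i by omega,
      Nat.choose_symm_of_eq_add (show (k : ℕ) - j = (i - j) + (k - i) by omega)] at h
    have hR := congrArg (Nat.cast : ℕ → R) h
    push_cast at hR
    linear_combination (-1 : R) ^ ((k : ℕ) - i) * hR.symm
  · rw [if_neg hmem]
    by_cases hji : (j : ℕ) ≤ i
    · simp [hji, show ¬ (i : ℕ) ≤ k by omega]
    · simp [hji]

theorem sum_deathEigenvectors_mul_deathEigenvectorsInv_smul {M : Type*} [AddCommMonoid M]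
    [Module R M] (j k : Fin (n + 1)) (y : ℕ → M) :
    ∑ i : Fin (n + 1), (deathEigenvectors R n k i * deathEigenvectorsInv R n i j) • y i =
      ((n - j).choose (k - j) : R) •
        ∑ i ∈ Icc (j : ℕ) k, ((-1) ^ ((k : ℕ) - i) * ((k - j : ℕ).choose (k - i) : R)) • y i := by
  simp only [deathEigenvectors_mul_deathEigenvectorsInv_apply, ite_smul, zero_smul]
  rw [Fin.sum_univ_eq_sum_range (fun i => if i ∈ Icc (j : ℕ) k then
      (((n - j).choose (k - j) : R) * ((-1) ^ ((k : ℕ) - i) * ((k - j : ℕ).choose (k - i) : R))) •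
        y i
      else 0), ← sum_filter, smul_sum]
  have hIcc : (range (n + 1)).filter (· ∈ Icc (j : ℕ) k) = Icc (j : ℕ) k := by
    ext i
    simp only [mem_filter, mem_range, mem_Icc]
    omega
  simp only [hIcc, mul_smul]

theorem deathEigenvectors_mul_deathEigenvectorsInv :
    deathEigenvectors R n * deathEigenvectorsInv R n = 1 := by
  ext k j
  have h := sum_deathEigenvectors_mul_deathEigenvectorsInv_smul (R := R) j k (fun _ => (1 : R))
  simp only [smul_eq_mul, mul_one] at h
  rw [mul_apply, h, sum_Icc_neg_one_pow_mul_choose, one_apply]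
  split_ifs <;> simp_all [Fin.ext_iff]

theorem deathEigenvectorsInv_mul_deathGenerator :
    deathEigenvectorsInv R n * deathGenerator R n =
      diagonal (fun i : Fin (n + 1) => -((n - i : ℕ) : R)) * deathEigenvectorsInv R n := by
  ext i j
  let w : ℕ → R := fun c => if c ≤ (i : ℕ) then ((n - c).choose (i - c) : R) else 0
  have hA : ∀ c : Fin (n + 1), deathGenerator R n c j =
      (if (c : ℕ) = j then -((n - j : ℕ) : R) else 0) +
        (if (c : ℕ) = j + 1 then ((n - j : ℕ) : R) else 0) := by
    intro c
    simp only [deathGenerator, of_apply, Fin.ext_iff]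
    split_ifs <;> first | omega | simp_all
  have hsum : (deathEigenvectorsInv R n * deathGenerator R n) i j =
      w j * -((n - j : ℕ) : R) + w ((j : ℕ) + 1) * ((n - j : ℕ) : R) := by
    have hW : ∀ c : Fin (n + 1), deathEigenvectorsInv R n i c = w c := fun _ => rfl
    rw [mul_apply]
    simp only [hA, hW, mul_add, sum_add_distrib, mul_ite, mul_zero]
    rw [Fin.sum_univ_eq_sum_range (fun c => if c = (j : ℕ) then w c * -((n - j : ℕ) : R) else 0),
      Fin.sum_univ_eq_sum_range (fun c => if c = (j : ℕ) + 1 then w c * ((n - j : ℕ) : R) else 0),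
      sum_ite_eq', sum_ite_eq', if_pos (mem_range.2 j.is_lt)]
    split_ifs with hj
    · rfl
    · rw [show n - (j : ℕ) = 0 by simp at hj; omega]
      simp
  rw [hsum, diagonal_mul]
  change _ = -((n - i : ℕ) : R) * w j
  have h := congrArg (Nat.cast : ℕ → R)
    (sub_mul_choose_recurrence (j := j) (Nat.lt_succ_iff.mp i.is_lt))
  push_cast [apply_ite (Nat.cast : ℕ → R)] at h
  simp only [w]
  linear_combination h

end DeathGenerator

section MatrixExp

variable {ι m 𝔸 : Type*}

theorem Matrix.diagonal_kronecker_add_one_kronecker [DecidableEq ι] [CommRing 𝔸] (μ : ι → 𝔸)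
    (D Q : Matrix m m 𝔸) :
    diagonal μ ⊗ₖ D + (1 : Matrix ι ι 𝔸) ⊗ₖ Q =
      reindex (Equiv.prodComm m ι) (Equiv.prodComm m ι) (blockDiagonal fun i => μ i • D + Q) := by
  rw [← diagonal_one, diagonal_kronecker, diagonal_kronecker]
  ext ⟨i, a⟩ ⟨j, b⟩
  simp only [add_apply, submatrix_apply, reindex_apply, blockDiagonal_apply, Equiv.prodComm_symm,
    Equiv.prodComm_apply, Prod.swap_prod_mk, smul_apply, smul_eq_mul]
  split_ifs <;> simp

variable [Fintype ι] [Fintype m]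

theorem Matrix.exp_reindex [DecidableEq ι] [DecidableEq m] [Ring 𝔸] [TopologicalSpace 𝔸]
    [IsTopologicalRing 𝔸] [T2Space 𝔸] [Algebra ℚ 𝔸] (e : ι ≃ m) (M : Matrix ι ι 𝔸) :
    exp (reindex e e M) = reindex e e (exp M) := by
  let φ := reindexAlgEquiv ℚ 𝔸 e
  have hφ : Continuous φ := continuous_id.matrix_reindex e e
  have hφ' : Continuous φ.symm := continuous_id.matrix_reindex e.symm e.symm
  change exp (φ M) = φ (exp M)
  simp_rw [exp_eq_tsum_rat]
  rw [Function.LeftInverse.map_tsum _ hφ hφ' φ.symm_apply_apply]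
  simp only [map_smul, map_pow]

theorem Matrix.exp_pi [DecidableEq m] [NormedRing 𝔸] [NormedAlgebra ℚ 𝔸] [CompleteSpace 𝔸]
    (v : ι → Matrix m m 𝔸) : exp v = fun i => exp (v i) := by
  -- completeness comes from the product uniformity, which the operator-norm structure agrees
  -- with only up to unfolding, so instance search does not find it
  open scoped Norms.Operator in
  exact @Pi.exp_def ι (fun _ => Matrix m m 𝔸) _ _ _
    (fun _ => (inferInstance : CompleteSpace (m → m → 𝔸))) v

theorem Matrix.exp_kronecker_add_one_kronecker [DecidableEq ι] [DecidableEq m] [NormedCommRing 𝔸]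
    [NormedAlgebra ℚ 𝔸] [CompleteSpace 𝔸] {A V W : Matrix ι ι 𝔸} {μ : ι → 𝔸}
    (hVW : V * W = 1) (hWA : W * A = diagonal μ * W) (D Q : Matrix m m 𝔸) :
    exp (A ⊗ₖ D + (1 : Matrix ι ι 𝔸) ⊗ₖ Q) =
      (V ⊗ₖ (1 : Matrix m m 𝔸)) *
        reindex (Equiv.prodComm m ι) (Equiv.prodComm m ι)
          (blockDiagonal fun i => exp (μ i • D + Q)) *
        (W ⊗ₖ (1 : Matrix m m 𝔸)) := by
  have hU : (V ⊗ₖ 1) * (W ⊗ₖ (1 : Matrix m m 𝔸)) = 1 := by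
    rw [← mul_kronecker_mul, hVW, one_mul, one_kronecker_one]
  have hA : A = V * diagonal μ * W := by rw [mul_assoc, ← hWA, ← mul_assoc, hVW, one_mul]
  have hconj : A ⊗ₖ D + (1 : Matrix ι ι 𝔸) ⊗ₖ Q =
      (V ⊗ₖ 1) * (diagonal μ ⊗ₖ D + (1 : Matrix ι ι 𝔸) ⊗ₖ Q) * (V ⊗ₖ 1)⁻¹ := by
    rw [inv_eq_right_inv hU, mul_add, add_mul, ← mul_kronecker_mul, ← mul_kronecker_mul,
      ← mul_kronecker_mul, ← mul_kronecker_mul, ← hA]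
    simp only [mul_one, one_mul, hVW]
  rw [hconj, exp_conj _ _ (IsUnit.of_mul_eq_one _ hU), inv_eq_right_inv hU,
    diagonal_kronecker_add_one_kronecker, exp_reindex, exp_blockDiagonal, exp_pi]

variable {R : Type*} [CommSemiring R]

theorem Matrix.kronecker_one_mulVec_apply [DecidableEq m] (V : Matrix ι ι R) (u : ι × m → R)
    (k : ι) (a : m) :
    ((V ⊗ₖ (1 : Matrix m m R)) *ᵥ u) (k, a) = ∑ i, V k i * u (i, a) := by
  simp [mulVec, dotProduct, Fintype.sum_prod_type, one_apply]

theorem Matrix.reindex_blockDiagonal_mulVec_apply [DecidableEq ι] (B : ι → Matrix m m R)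
    (u : ι × m → R) (k : ι) (a : m) :
    (reindex (Equiv.prodComm m ι) (Equiv.prodComm m ι) (blockDiagonal B) *ᵥ u) (k, a) =
      (B k *ᵥ fun b => u (k, b)) a := by
  simp [mulVec, dotProduct, Fintype.sum_prod_type, blockDiagonal_apply]

theorem Matrix.kronecker_one_conj_blockDiagonal_mulVec_apply [DecidableEq ι] [DecidableEq m]
    (V W : Matrix ι ι R) (B : ι → Matrix m m R) (x : m → R) (j k : ι) :
    (fun a => (((V ⊗ₖ (1 : Matrix m m R)) *
        reindex (Equiv.prodComm m ι) (Equiv.prodComm m ι) (blockDiagonal B) *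
        (W ⊗ₖ (1 : Matrix m m R))) *ᵥ fun p => if p.1 = j then x p.2 else 0) (k, a)) =
      ∑ i, (V k i * W i j) • (B i *ᵥ x) := by
  ext a
  simp only [← mulVec_mulVec, kronecker_one_mulVec_apply, reindex_blockDiagonal_mulVec_apply,
    Finset.sum_apply, Pi.smul_apply, smul_eq_mul]
  refine sum_congr rfl fun i _ => ?_
  simp only [mul_ite, mul_zero, sum_ite_eq', mem_univ, if_true]
  rw [show (fun b => W i j * x b) = W i j • x from rfl, mulVec_smul, Pi.smul_apply, smul_eq_mul,
    mul_assoc]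

end MatrixExp

theorem stmt_8_general (d : ℕ) (n : ℕ)
    (Q : Matrix (Fin d) (Fin d) ℝ) (l : Fin d → ℝ)
    (A : Matrix (Fin (n + 1)) (Fin (n + 1)) ℝ)
    (hA : ∀ i j : Fin (n + 1), A i j =
      if i = j then -((n - (i : ℕ) : ℕ) : ℝ)
      else if (i : ℕ) = (j : ℕ) + 1 then ((n - (j : ℕ) : ℕ) : ℝ) else 0)
    (bQ : Matrix (Fin (n + 1) × Fin d) (Fin (n + 1) × Fin d) ℝ)
    (hbQ : bQ = A ⊗ₖ Matrix.diagonal l + (1 : Matrix (Fin (n + 1)) (Fin (n + 1)) ℝ) ⊗ₖ Q)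
    (s : ℝ) (x : Fin d → ℝ) (j k : Fin (n + 1))
    (v : Fin (n + 1) × Fin d → ℝ)
    (hv : v = fun p => if p.1 = j then x p.2 else 0) :
    ((j : ℕ) ≤ (k : ℕ) →
      (fun a : Fin d => (NormedSpace.exp (s • bQ) *ᵥ v) (k, a)) =
        ((Nat.choose (n - j) ((k : ℕ) - (j : ℕ)) : ℝ)) •
          ∑ i ∈ Finset.Icc (j : ℕ) (k : ℕ),
            ((-1 : ℝ) ^ ((k : ℕ) - i) * (Nat.choose ((k : ℕ) - (j : ℕ)) ((k : ℕ) - i) : ℝ)) •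
              (NormedSpace.exp (s • (Q - ((n - i : ℕ) : ℝ) • Matrix.diagonal l)) *ᵥ x)) ∧
    ((k : ℕ) < (j : ℕ) →
      (fun a : Fin d => (NormedSpace.exp (s • bQ) *ᵥ v) (k, a)) = 0) := by
  have hA' : A = deathGenerator ℝ n := Matrix.ext hA
  have hsbQ : s • bQ = A ⊗ₖ (s • diagonal l) + (1 : Matrix (Fin (n + 1)) _ ℝ) ⊗ₖ (s • Q) := by
    rw [hbQ, smul_add, kronecker_smul, kronecker_smul]
  have hblock : ∀ i : Fin (n + 1), -((n - i : ℕ) : ℝ) • (s • diagonal l) + s • Q =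
      s • (Q - ((n - i : ℕ) : ℝ) • diagonal l) := fun i => by module
  have key : (fun a : Fin d => (exp (s • bQ) *ᵥ v) (k, a)) =
      ((n - j).choose (k - j) : ℝ) • ∑ i ∈ Icc (j : ℕ) k,
        ((-1) ^ ((k : ℕ) - i) * ((k - j : ℕ).choose (k - i) : ℝ)) •
          (exp (s • (Q - ((n - i : ℕ) : ℝ) • diagonal l)) *ᵥ x) := by
    rw [hsbQ, hA', exp_kronecker_add_one_kronecker deathEigenvectors_mul_deathEigenvectorsInv
      deathEigenvectorsInv_mul_deathGenerator, hv, kronecker_one_conj_blockDiagonal_mulVec_apply]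
    simp only [hblock]
    exact sum_deathEigenvectors_mul_deathEigenvectorsInv_smul j k
      (fun i => exp (s • (Q - ((n - i : ℕ) : ℝ) • diagonal l)) *ᵥ x)
  refine ⟨fun _ => key, fun hkj => ?_⟩
  rw [key, Icc_eq_empty_of_lt hkj, sum_empty, smul_zero]

/-- Blockwise action of `exp(s𝐐)` on `e_j ⊗ x`: explicit conditional-probability formula. -/
theorem stmt_8 (d : ℕ) (hd : 1 ≤ d) (n : ℕ)
    (Q : Matrix (Fin d) (Fin d) ℝ) (l : Fin d → ℝ)
    (A : Matrix (Fin (n + 1)) (Fin (n + 1)) ℝ)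
    (hA : ∀ i j : Fin (n + 1), A i j =
      if i = j then -((n - (i : ℕ) : ℕ) : ℝ)
      else if (i : ℕ) = (j : ℕ) + 1 then ((n - (j : ℕ) : ℕ) : ℝ) else 0)
    (bQ : Matrix (Fin (n + 1) × Fin d) (Fin (n + 1) × Fin d) ℝ)
    (hbQ : bQ = A ⊗ₖ Matrix.diagonal l + (1 : Matrix (Fin (n + 1)) (Fin (n + 1)) ℝ) ⊗ₖ Q)
    (s : ℝ) (x : Fin d → ℝ) (j k : Fin (n + 1))
    (v : Fin (n + 1) × Fin d → ℝ)
    (hv : v = fun p => if p.1 = j then x p.2 else 0) :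
    ((j : ℕ) ≤ (k : ℕ) →
      (fun a : Fin d => (NormedSpace.exp (s • bQ) *ᵥ v) (k, a)) =
        ((Nat.choose (n - j) ((k : ℕ) - (j : ℕ)) : ℝ)) •
          ∑ i ∈ Finset.Icc (j : ℕ) (k : ℕ),
            ((-1 : ℝ) ^ ((k : ℕ) - i) * (Nat.choose ((k : ℕ) - (j : ℕ)) ((k : ℕ) - i) : ℝ)) •
              (NormedSpace.exp (s • (Q - ((n - i : ℕ) : ℝ) • Matrix.diagonal l)) *ᵥ x)) ∧
    ((k : ℕ) < (j : ℕ) →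
      (fun a : Fin d => (NormedSpace.exp (s • bQ) *ᵥ v) (k, a)) = 0) :=
  stmt_8_general d n Q l A hA bQ hbQ s x j k v hv
end

section
/- Let Q be a real d×d matrix, λ ∈ ℝ^d, n ∈ ℕ, all regarded as complex. Let A be the (n+1)×(n+1) matrix with A_{ii} = −(n−i), A_{i+1,i} = n−i, other entries zero, and let 𝐐 = A ⊗ diag(λ) + I_{n+1} ⊗ Q. For u ∈ ℝ let e(u) = (1, e^{iu}, …, e^{niu}) ∈ ℂ^{n+1}. Then for every s ∈ ℝ, every x ∈ ℂ^d and every index 0 ≤ k ≤ n, (e(u)ᵀ ⊗ I_d) · exp(s𝐐) · (e_k ⊗ x) = ∑_{j=k}^{n} C(n−k, j−k) · (1 − e^{iu})^{n−j} · e^{iuj} · exp(s(Q − (n−j)·diag(λ))) · x. -/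
/-!
The matrix `A` is diagonalisable: `A S = S diag(-(n - j))` with `S i j = (-1)^(i-j) C(n-j, i-j)`,
and `S⁻¹ i j = C(n-j, i-j)`. In the picture `e_i ↦ t^i`, `A` acts as `(t - 1)(n - t d/dt)`, the
`j`-th column of `S` is the eigenpolynomial `t^j (1 - t)^(n-j)`, and `S⁻¹` encodes the expansion
`t^k = t^k (t + (1 - t))^(n-k)`. Conjugating by `S ⊗ I` turns `𝐐` into the block diagonal matrix
with blocks `Q - (n - j) diag(λ)`, whose exponential is taken blockwise, and pairing with `e(u)`
evaluates the eigenpolynomials at `t = e^{iu}`.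
-/

open Kronecker NormedSpace Matrix Finset

namespace Matrix
variable {𝕜 ι m : Type*} [RCLike 𝕜] [Fintype ι] [DecidableEq ι] [Fintype m] [DecidableEq m]

theorem exp_reindex_s9 {κ : Type*} [Fintype κ] [DecidableEq κ] (e : ι ≃ κ) (M : Matrix ι ι 𝕜) :
    exp (reindex e e M) = reindex e e (exp M) :=
  open scoped Norms.Operator in
  (map_exp (reindexAlgEquiv 𝕜 𝕜 e) (continuous_id.matrix_reindex e e) M).symm

omit [Fintype ι] [Fintype m] [DecidableEq m] in
theorem diagonal_kronecker_add_one_kronecker_s9 {R : Type*} [CommRing R] (c : ι → R)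
    (D M : Matrix m m R) :
    diagonal c ⊗ₖ D + 1 ⊗ₖ M = reindex (Equiv.prodComm m ι) (Equiv.prodComm m ι)
      (blockDiagonal fun i => c i • D + M) := by
  ext ⟨i, a⟩ ⟨j, b⟩
  by_cases h : i = j <;> simp [h, blockDiagonal_apply]

theorem exp_diagonal_kronecker_add_one_kronecker (c : ι → 𝕜) (D M : Matrix m m 𝕜) :
    exp (diagonal c ⊗ₖ D + 1 ⊗ₖ M) = reindex (Equiv.prodComm m ι) (Equiv.prodComm m ι)
      (blockDiagonal fun i => exp (c i • D + M)) := by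
  rw [diagonal_kronecker_add_one_kronecker_s9, exp_reindex_s9, exp_blockDiagonal]
  congr 2
  funext i
  open scoped Norms.Operator in
  exact map_exp (Pi.evalRingHom _ i) (continuous_apply i) _

omit [Fintype ι] [DecidableEq ι] in
theorem kronecker_one_mulVec_apply_s9 {R ι' : Type*} [Fintype ι'] [CommSemiring R]
    (P : Matrix ι ι' R) (w : ι' × m → R) (i : ι) (a : m) :
    ((P ⊗ₖ (1 : Matrix m m R)) *ᵥ w) (i, a) = ∑ j, P i j * w (j, a) := by
  simp [mulVec, dotProduct, Fintype.sum_prod_type, one_apply]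

omit [DecidableEq m] in
theorem reindex_blockDiagonal_mulVec_apply_s9 {R : Type*} [CommSemiring R]
    (g : ι → Matrix m m R) (w : ι × m → R) (i : ι) (a : m) :
    (reindex (Equiv.prodComm m ι) (Equiv.prodComm m ι) (blockDiagonal g) *ᵥ w) (i, a) =
      (g i *ᵥ fun b => w (i, b)) a := by
  simp [mulVec, dotProduct, Fintype.sum_prod_type, blockDiagonal_apply]

theorem kronecker_add_one_kronecker_eq_conj {R : Type*} [CommRing R] {G P P' : Matrix ι ι R}
    {c : ι → R} (hPP' : P * P' = 1) (hGP : G * P = P * diagonal c) (D M : Matrix m m R) :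
    G ⊗ₖ D + 1 ⊗ₖ M = (P ⊗ₖ 1) * (diagonal c ⊗ₖ D + 1 ⊗ₖ M) * (P' ⊗ₖ 1) := by
  have hG : G = P * diagonal c * P' := by
    rw [← hGP, Matrix.mul_assoc, hPP', Matrix.mul_one]
  rw [Matrix.mul_add, Matrix.add_mul, ← mul_kronecker_mul, ← mul_kronecker_mul,
    ← mul_kronecker_mul, ← mul_kronecker_mul, hG]
  simp [hPP']

theorem exp_kronecker_add_one_kronecker_mulVec_apply {G P P' : Matrix ι ι 𝕜} {c : ι → 𝕜}
    (hPP' : P * P' = 1) (hGP : G * P = P * diagonal c) (D M : Matrix m m 𝕜)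
    (w : ι × m → 𝕜) (i : ι) (a : m) :
    (exp (G ⊗ₖ D + 1 ⊗ₖ M) *ᵥ w) (i, a) =
      ∑ q, P i q * (exp (c q • D + M) *ᵥ fun b => ∑ p, P' q p * w (p, b)) a := by
  let U : (Matrix (ι × m) (ι × m) 𝕜)ˣ :=
    ⟨P ⊗ₖ 1, P' ⊗ₖ 1, by simp [← mul_kronecker_mul, hPP'],
      by simp [← mul_kronecker_mul, mul_eq_one_comm.mp hPP']⟩
  have hconj : G ⊗ₖ D + 1 ⊗ₖ M =
      (U : Matrix (ι × m) (ι × m) 𝕜) * (diagonal c ⊗ₖ D + 1 ⊗ₖ M) * (↑U⁻¹ : Matrix _ _ 𝕜) :=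
    kronecker_add_one_kronecker_eq_conj hPP' hGP D M
  rw [hconj, exp_units_conj, exp_diagonal_kronecker_add_one_kronecker]
  simp only [U, Units.inv_mk, ← mulVec_mulVec, kronecker_one_mulVec_apply_s9,
    reindex_blockDiagonal_mulVec_apply_s9]

theorem exp_kronecker_add_one_kronecker_mulVec_single_apply {G P P' : Matrix ι ι 𝕜} {c : ι → 𝕜}
    (hPP' : P * P' = 1) (hGP : G * P = P * diagonal c) (D M : Matrix m m 𝕜)
    (k : ι) (x : m → 𝕜) (i : ι) (a : m) :
    (exp (G ⊗ₖ D + 1 ⊗ₖ M) *ᵥ fun p => if p.1 = k then x p.2 else 0) (i, a) =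
      ∑ q, P i q * P' q k * (exp (c q • D + M) *ᵥ x) a := by
  rw [exp_kronecker_add_one_kronecker_mulVec_apply hPP' hGP]
  refine sum_congr rfl fun q _ => ?_
  simp only [mul_ite, mul_zero, sum_ite_eq', mem_univ, if_true]
  rw [show (fun b => P' q k * x b) = P' q k • x from rfl, mulVec_smul, Pi.smul_apply, smul_eq_mul,
    mul_assoc]

end Matrix

section Coefficients
variable (R : Type*) [CommRing R]

def binomEntry (n i j : ℕ) : R := if j ≤ i then ((n - j).choose (i - j) : R) else 0

def signedBinomEntry (n i j : ℕ) : R :=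
  if j ≤ i then (-1) ^ (i - j) * ((n - j).choose (i - j) : R) else 0

def countingRate (n i j : ℕ) : R :=
  if i = j then -((n - i : ℕ) : R) else if i = j + 1 then ((n - j : ℕ) : R) else 0

variable {R}

theorem sum_range_eq_sum_range_add {M : Type*} [AddCommMonoid M] {f : ℕ → M} {a b n : ℕ}
    (hab : a ≤ b) (hbn : b ≤ n) (hf : ∀ p ≤ n, p < a ∨ b < p → f p = 0) :
    ∑ p ∈ range (n + 1), f p = ∑ t ∈ range (b - a + 1), f (a + t) := by
  rw [← sum_subset (s₁ := Ico a (b + 1)), sum_Ico_eq_sum_range, Nat.sub_add_comm hab]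
  · intro p; simp only [mem_Ico, mem_range]; omega
  · intro p hp hp'; simp only [mem_Ico, mem_range] at hp hp'; exact hf p (by omega) (by omega)

theorem sum_signedBinomEntry_mul_binomEntry {n i : ℕ} (hi : i ≤ n) (j : ℕ) :
    ∑ p ∈ range (n + 1), signedBinomEntry R n i p * binomEntry R n p j =
      if i = j then 1 else 0 := by
  rcases lt_or_ge i j with hij | hji
  · rw [if_neg hij.ne]
    refine sum_eq_zero fun p _ => ?_
    unfold signedBinomEntry binomEntry
    split_ifs <;> first | omega | simp
  · rw [sum_range_eq_sum_range_add hji hi fun p _ hp => by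
      unfold signedBinomEntry binomEntry; split_ifs <;> first | omega | simp]
    have hterm : ∀ t ∈ range (i - j + 1),
        signedBinomEntry R n i (j + t) * binomEntry R n (j + t) j =
          ((n - j).choose (i - j) : R) * (1 ^ t * (-1) ^ (i - j - t) * (i - j).choose t) := by
      intro t ht
      have ht : t ≤ i - j := Nat.lt_succ_iff.mp (mem_range.mp ht)
      have hchoose : ((n - j).choose (i - j) * (i - j).choose t : R) =
          (n - j).choose t * (n - (j + t)).choose (i - (j + t)) := by
        rw [← Nat.cast_mul, ← Nat.cast_mul, Nat.choose_mul ht]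
        congr 3 <;> omega
      rw [signedBinomEntry, binomEntry, if_pos (by omega), if_pos (by omega),
        Nat.add_sub_cancel_left, show i - j - t = i - (j + t) by omega]
      linear_combination -(-1 : R) ^ (i - (j + t)) * hchoose
    rw [sum_congr rfl hterm, ← mul_sum, ← add_pow, add_neg_cancel, zero_pow_eq]
    by_cases hij : i = j
    · simp [hij]
    · simp [hij, show i - j ≠ 0 by omega]

theorem sum_pow_mul_signedBinomEntry {n q : ℕ} (hq : q ≤ n) (z : R) :
    ∑ p ∈ range (n + 1), z ^ p * signedBinomEntry R n p q = z ^ q * (1 - z) ^ (n - q) := by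
  rw [sum_range_eq_sum_range_add hq le_rfl fun p _ hp => by
      unfold signedBinomEntry; split_ifs <;> first | omega | simp]
  have hterm : ∀ t ∈ range (n - q + 1), z ^ (q + t) * signedBinomEntry R n (q + t) q =
      z ^ q * ((-z) ^ t * 1 ^ (n - q - t) * (n - q).choose t) := by
    intro t _
    rw [signedBinomEntry, if_pos (by omega), Nat.add_sub_cancel_left, pow_add, neg_pow]
    ring
  rw [sum_congr rfl hterm, ← mul_sum, ← add_pow, neg_add_eq_sub]

theorem sum_countingRate_mul_signedBinomEntry {n i : ℕ} (hi : i ≤ n) (j : ℕ) :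
    ∑ p ∈ range (n + 1), countingRate R n i p * signedBinomEntry R n p j =
      signedBinomEntry R n i j * -((n - j : ℕ) : R) := by
  rcases i with _ | i
  · rw [sum_range_eq_sum_range_add le_rfl hi fun p _ hp => by
      simp only [countingRate]; split_ifs <;> first | omega | simp_all]
    rcases Nat.eq_zero_or_pos j with rfl | hj
    · simp [countingRate, mul_comm]
    · simp [signedBinomEntry, Nat.not_le.mpr hj]
  · rw [sum_range_eq_sum_range_add (a := i) (b := i + 1) (by omega) hi fun p _ hp => by
      simp only [countingRate]; split_ifs <;> first | omega | simp]
    simp only [Nat.add_sub_cancel_left, sum_range_succ, add_zero, countingRate, Nat.succ_ne_self,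
      (Nat.succ_ne_self _).symm, if_false, if_true]
    rcases lt_trichotomy j (i + 1) with hj | rfl | hj
    · obtain ⟨r, rfl⟩ := Nat.exists_eq_add_of_le (Nat.lt_succ_iff.mp hj)
      have hchoose : ((n - j).choose (r + 1) * (r + 1) : R) =
          (n - j).choose r * (n - (j + r) : ℕ) := by
        rw [show n - (j + r) = n - j - r by omega]
        exact_mod_cast congrArg (Nat.cast (R := R)) (Nat.choose_succ_right_eq (n - j) r)
      have hsplit : ((n - j : ℕ) : R) = (n - (j + r + 1) : ℕ) + (r + 1) := by
        rw [← Nat.cast_succ, ← Nat.cast_add]; congr 1; omega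
      simp only [signedBinomEntry, if_pos (show j ≤ j + r by omega),
        if_pos (show j ≤ j + r + 1 by omega), show j + r + 1 - j = r + 1 by omega,
        Nat.add_sub_cancel_left, hsplit, pow_succ]
      linear_combination -(-1 : R) ^ r * hchoose
    · simp [signedBinomEntry]
    · simp [signedBinomEntry, show ¬ j ≤ i + 1 by omega, show ¬ j ≤ i by omega]

variable (R) (n : ℕ)

def binomialMatrix : Matrix (Fin (n + 1)) (Fin (n + 1)) R :=
  Matrix.of fun i j => binomEntry R n i j

@[simp]
theorem binomialMatrix_apply (i j : Fin (n + 1)) : binomialMatrix R n i j = binomEntry R n i j :=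
  rfl

def signedBinomialMatrix : Matrix (Fin (n + 1)) (Fin (n + 1)) R :=
  Matrix.of fun i j => signedBinomEntry R n i j

def countingGenerator : Matrix (Fin (n + 1)) (Fin (n + 1)) R :=
  Matrix.of fun i j => countingRate R n i j

theorem signedBinomialMatrix_mul_binomialMatrix :
    signedBinomialMatrix R n * binomialMatrix R n = 1 := by
  ext i j
  rw [Matrix.mul_apply, Matrix.one_apply, ← if_congr Fin.val_inj rfl rfl]
  exact (Fin.sum_univ_eq_sum_range (fun p => signedBinomEntry R n i p * binomEntry R n p j) _).trans
    (sum_signedBinomEntry_mul_binomEntry i.is_le j)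

theorem countingGenerator_mul_signedBinomialMatrix :
    countingGenerator R n * signedBinomialMatrix R n =
      signedBinomialMatrix R n * Matrix.diagonal fun j : Fin (n + 1) => -((n - j : ℕ) : R) := by
  ext i j
  rw [Matrix.mul_apply, Matrix.mul_diagonal]
  exact (Fin.sum_univ_eq_sum_range (fun p => countingRate R n i p * signedBinomEntry R n p j) _).trans
    (sum_countingRate_mul_signedBinomEntry i.is_le j)

variable {R n}

theorem sum_pow_mul_signedBinomialMatrix (z : R) (q : Fin (n + 1)) :
    ∑ j : Fin (n + 1), z ^ (j : ℕ) * signedBinomialMatrix R n j q =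
      z ^ (q : ℕ) * (1 - z) ^ (n - q) :=
  (Fin.sum_univ_eq_sum_range (fun p => z ^ p * signedBinomEntry R n p q) _).trans
    (sum_pow_mul_signedBinomEntry q.is_le z)

end Coefficients

theorem stmt_9_general (d : ℕ) (n : ℕ)
    (Qc : Matrix (Fin d) (Fin d) ℂ)
    (lc : Fin d → ℂ)
    (A : Matrix (Fin (n + 1)) (Fin (n + 1)) ℂ)
    (hA : ∀ i j : Fin (n + 1), A i j =
      if i = j then -((n - (i : ℕ) : ℕ) : ℂ)
      else if (i : ℕ) = (j : ℕ) + 1 then ((n - (j : ℕ) : ℕ) : ℂ) else 0)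
    (bQ : Matrix (Fin (n + 1) × Fin d) (Fin (n + 1) × Fin d) ℂ)
    (hbQ : bQ = A ⊗ₖ Matrix.diagonal lc + (1 : Matrix (Fin (n + 1)) (Fin (n + 1)) ℂ) ⊗ₖ Qc)
    (u s : ℝ) (x : Fin d → ℂ) (k : Fin (n + 1))
    (v : Fin (n + 1) × Fin d → ℂ)
    (hv : v = fun p => if p.1 = k then x p.2 else 0) :
    (fun a : Fin d => ∑ j : Fin (n + 1),
        Complex.exp (Complex.I * u * (j : ℕ)) * (NormedSpace.exp ((s : ℂ) • bQ) *ᵥ v) (j, a)) =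
      ∑ j ∈ Finset.Icc (k : ℕ) n,
        ((Nat.choose (n - k) (j - (k : ℕ)) : ℂ) *
            (1 - Complex.exp (Complex.I * u)) ^ (n - j) * Complex.exp (Complex.I * u * j)) •
          (NormedSpace.exp ((s : ℂ) • (Qc - ((n - j : ℕ) : ℂ) • Matrix.diagonal lc)) *ᵥ x) := by
  set z := Complex.exp (Complex.I * u)
  have hexp_mul : ∀ j : ℕ, Complex.exp (Complex.I * u * j) = z ^ j := fun j => by
    rw [mul_comm _ (j : ℂ), Complex.exp_nat_mul]
  have hA' : A = countingGenerator ℂ n := by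
    ext i j; rw [hA]; simp [countingGenerator, countingRate, Fin.ext_iff]
  have hbQ' : (s : ℂ) • bQ = A ⊗ₖ ((s : ℂ) • diagonal lc) + 1 ⊗ₖ ((s : ℂ) • Qc) := by
    rw [hbQ, smul_add, kronecker_smul, kronecker_smul]
  have hblock : ∀ c : ℂ,
      -c • (s : ℂ) • diagonal lc + (s : ℂ) • Qc = (s : ℂ) • (Qc - c • diagonal lc) :=
    fun c => by module
  funext a
  simp only [hv, hbQ', hA', exp_kronecker_add_one_kronecker_mulVec_single_apply
    (signedBinomialMatrix_mul_binomialMatrix ℂ n) (countingGenerator_mul_signedBinomialMatrix ℂ n),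
    hblock, hexp_mul, mul_sum]
  rw [sum_comm]
  simp_rw [← mul_assoc, ← sum_mul, sum_pow_mul_signedBinomialMatrix, binomialMatrix_apply]
  rw [Fin.sum_univ_eq_sum_range (fun q => z ^ q * (1 - z) ^ (n - q) * binomEntry ℂ n q k *
    (exp ((s : ℂ) • (Qc - ((n - q : ℕ) : ℂ) • diagonal lc)) *ᵥ x) a), Finset.sum_apply,
    ← sum_subset fun q hq => mem_range.mpr (Nat.lt_succ_of_le (mem_Icc.mp hq).2)]
  · refine sum_congr rfl fun q hq => ?_
    rw [binomEntry, if_pos (mem_Icc.mp hq).1, Pi.smul_apply, smul_eq_mul]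
    ring
  · intro q hq hqk
    rw [binomEntry, if_neg fun hkq => hqk (mem_Icc.mpr ⟨hkq, Nat.lt_succ_iff.mp (mem_range.mp hq)⟩)]
    simp

/-- Conditional characteristic function formula: `(e(u)ᵀ ⊗ I) exp(s𝐐) (e_k ⊗ x)`. -/
theorem stmt_9 (d : ℕ) (hd : 1 ≤ d) (n : ℕ)
    (Q : Matrix (Fin d) (Fin d) ℝ) (l : Fin d → ℝ)
    (Qc : Matrix (Fin d) (Fin d) ℂ) (hQc : Qc = Q.map (Complex.ofReal))
    (lc : Fin d → ℂ) (hlc : lc = fun i => (l i : ℂ))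
    (A : Matrix (Fin (n + 1)) (Fin (n + 1)) ℂ)
    (hA : ∀ i j : Fin (n + 1), A i j =
      if i = j then -((n - (i : ℕ) : ℕ) : ℂ)
      else if (i : ℕ) = (j : ℕ) + 1 then ((n - (j : ℕ) : ℕ) : ℂ) else 0)
    (bQ : Matrix (Fin (n + 1) × Fin d) (Fin (n + 1) × Fin d) ℂ)
    (hbQ : bQ = A ⊗ₖ Matrix.diagonal lc + (1 : Matrix (Fin (n + 1)) (Fin (n + 1)) ℂ) ⊗ₖ Qc)
    (u s : ℝ) (x : Fin d → ℂ) (k : Fin (n + 1))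
    (v : Fin (n + 1) × Fin d → ℂ)
    (hv : v = fun p => if p.1 = k then x p.2 else 0) :
    (fun a : Fin d => ∑ j : Fin (n + 1),
        Complex.exp (Complex.I * u * (j : ℕ)) * (NormedSpace.exp ((s : ℂ) • bQ) *ᵥ v) (j, a)) =
      ∑ j ∈ Finset.Icc (k : ℕ) n,
        ((Nat.choose (n - k) (j - (k : ℕ)) : ℂ) *
            (1 - Complex.exp (Complex.I * u)) ^ (n - j) * Complex.exp (Complex.I * u * j)) •
          (NormedSpace.exp ((s : ℂ) • (Qc - ((n - j : ℕ) : ℂ) • Matrix.diagonal lc)) *ᵥ x) :=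
  stmt_9_general d n Qc lc A hA bQ hbQ u s x k v hv
end

section
/- Let Q be a real d×d matrix whose off-diagonal entries are nonnegative, whose columns each sum to zero, and whose rank equals d − 1, and let π ∈ ℝ^d satisfy Qπ = 0, π_i > 0 for all i, and ∑_i π_i = 1. Then for every fixed t > 0, as α → ∞ along the reals, exp(αtQ) converges to π 1ᵀ. -/
open Matrix Filter NormedSpace

open scoped Nat Topology

/-!
Adding a multiple of the identity to `Q` makes it entrywise nonnegative, so `exp (s • Q)` is
column-stochastic for `s ≥ 0`. Since the kernel of `Q` is spanned by the positive vector `π`,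
the positive off-diagonal entries of `Q` connect all states, and therefore `exp Q` is entrywise
positive. A column-stochastic matrix with all entries `≥ ε` contracts the `ℓ¹` norm of zero-sum
vectors by the factor `1 - d ε` (Doeblin), so `exp (s • Q) *ᵥ (e_j - π) → 0` geometrically,
i.e. the `j`-th column of `exp (s • Q)` tends to `π`.
-/

namespace Matrix

variable {n : Type*} [Fintype n]

theorem exists_eq_smul_of_mulVec_eq_zero {K : Type*} [Field K] {Q : Matrix n n K}
    (hrank : Q.rank = Fintype.card n - 1) {π x : n → K} (hπ : Q *ᵥ π = 0) (hπ0 : π ≠ 0)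
    (hx : Q *ᵥ x = 0) : ∃ c : K, x = c • π := by
  have hπker : π ∈ LinearMap.ker Q.mulVecLin := hπ
  have hker_le : Module.finrank K (LinearMap.ker Q.mulVecLin) ≤ 1 := by
    have := LinearMap.finrank_range_add_finrank_ker Q.mulVecLin
    rw [Module.finrank_fintype_fun_eq_card] at this
    change Q.rank + _ = _ at this
    omega
  have hker_ne : Module.finrank K (LinearMap.ker Q.mulVecLin) ≠ 0 := by
    rw [Ne, Submodule.finrank_eq_zero, Submodule.eq_bot_iff]
    exact fun h => hπ0 (h π hπker)
  obtain ⟨c, hc⟩ := exists_smul_eq_of_finrank_eq_one (V := LinearMap.ker Q.mulVecLin)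
    (hker_le.antisymm (Nat.one_le_iff_ne_zero.2 hker_ne)) (x := ⟨π, hπker⟩)
    (by simpa using hπ0) ⟨x, hx⟩
  exact ⟨c, (congrArg Subtype.val hc).symm⟩

theorem mulVec_indicator_eq_zero {Q : Matrix n n ℝ} (hQoff : ∀ i j, i ≠ j → 0 ≤ Q i j)
    (hQcol : 1 ᵥ* Q = 0) {π : n → ℝ} (hπ : Q *ᵥ π = 0) (hπ0 : ∀ i, 0 ≤ π i) {S : Set n}
    (hS : ∀ k ∈ S, ∀ l ∉ S, Q l k = 0) : Q *ᵥ S.indicator π = 0 := by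
  have hle : ∀ l, (Q *ᵥ S.indicator π) l ≤ 0 := by
    intro l
    by_cases hl : l ∈ S
    · have hsplit := congrFun (congrArg (Q *ᵥ ·) (S.indicator_self_add_compl π)) l
      simp only [mulVec_add, hπ, Pi.add_apply, Pi.zero_apply] at hsplit
      have hcompl : 0 ≤ (Q *ᵥ Sᶜ.indicator π) l := by
        refine Finset.sum_nonneg fun k _ => ?_
        by_cases hk : k ∈ S
        · simp [hk]
        · rw [Set.indicator_of_mem (Set.mem_compl hk)]
          exact mul_nonneg (hQoff l k (ne_of_mem_of_not_mem hl hk)) (hπ0 k)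
      linarith
    · refine (Finset.sum_eq_zero fun k _ => ?_).le
      by_cases hk : k ∈ S
      · simp [hS k hk l hl]
      · simp [hk]
  have hsum : ∑ l, (Q *ᵥ S.indicator π) l = 0 := by
    simpa [dotProduct, hQcol] using dotProduct_mulVec 1 Q (S.indicator π)
  funext l
  exact (Finset.sum_eq_zero_iff_of_nonpos fun l _ => hle l).1 hsum l (Finset.mem_univ l)

variable [DecidableEq n]

theorem hasSum_exp (M : Matrix n n ℝ) :
    HasSum (fun k => (k !⁻¹ : ℝ) • M ^ k) (exp M) := by
  let : NormedRing (Matrix n n ℝ) := Matrix.linftyOpNormedRing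
  let : NormedAlgebra ℝ (Matrix n n ℝ) := Matrix.linftyOpNormedAlgebra
  exact exp_series_hasSum_exp' M

theorem hasSum_exp_apply (M : Matrix n n ℝ) (i j : n) :
    HasSum (fun k => (k !⁻¹ : ℝ) * (M ^ k) i j) (exp M i j) :=
  Pi.hasSum.1 (Pi.hasSum.1 (hasSum_exp M) i) j

theorem exp_mulVec_of_mulVec_eq_zero {M : Matrix n n ℝ} {v : n → ℝ} (hv : M *ᵥ v = 0) :
    exp M *ᵥ v = v := by
  refine ((hasSum_exp M).map (mulVec.addMonoidHomLeft v)
    (continuous_id.matrix_mulVec continuous_const)).unique ?_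
  convert hasSum_ite_eq 0 v with k
  rcases k with _ | k
  · simp [mulVec.addMonoidHomLeft]
  · simp only [mulVec.addMonoidHomLeft, AddMonoidHom.coe_mk, ZeroHom.coe_mk, Function.comp_apply]
    rw [smul_mulVec, pow_succ, ← mulVec_mulVec, hv, mulVec_zero, smul_zero,
      if_neg k.succ_ne_zero]

theorem vecMul_exp_of_vecMul_eq_zero {M : Matrix n n ℝ} {v : n → ℝ} (hv : v ᵥ* M = 0) :
    v ᵥ* exp M = v := by
  rw [← mulVec_transpose, ← exp_transpose]
  exact exp_mulVec_of_mulVec_eq_zero (by rwa [mulVec_transpose])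

theorem exp_apply_nonneg {B : Matrix n n ℝ} (hB : ∀ i j, 0 ≤ B i j) (i j : n) :
    0 ≤ exp B i j :=
  (hasSum_exp_apply B i j).nonneg fun k => by
    have := pow_apply_nonneg hB k i j
    positivity

theorem exp_apply_pos {B : Matrix n n ℝ} (hB : ∀ i j, 0 ≤ B i j) {i j : n} {k : ℕ}
    (hk : 0 < (B ^ k) i j) : 0 < exp B i j :=
  (by positivity : (0 : ℝ) < (k ! : ℝ)⁻¹ * (B ^ k) i j).trans_le <|
    le_hasSum (hasSum_exp_apply B i j) k fun m _ => by
      have := pow_apply_nonneg hB m i j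
      positivity

theorem exp_smul_one (r : ℝ) : exp (r • 1 : Matrix n n ℝ) = Real.exp r • 1 := by
  rw [smul_one_eq_diagonal, exp_diagonal, smul_one_eq_diagonal, Pi.exp_def, Real.exp_eq_exp_ℝ]

theorem exp_smul_eq_exp_smul_add_smul_one (Q : Matrix n n ℝ) (s c : ℝ) :
    exp (s • Q) = Real.exp (-(s * c)) • exp (s • (Q + c • 1)) := by
  have hsplit : s • Q = (-(s * c)) • (1 : Matrix n n ℝ) + s • (Q + c • 1) := by module
  rw [hsplit, exp_add_of_commute _ _ ((Commute.one_left _).smul_left _), exp_smul_one,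
    smul_one_mul]

section Doeblin

variable {P : Matrix n n ℝ}

theorem sum_abs_mulVec_le (hP : P ∈ colStochastic ℝ n) {ε : ℝ} (hε : ∀ i j, ε ≤ P i j)
    {x : n → ℝ} (hx : ∑ i, x i = 0) :
    ∑ i, |(P *ᵥ x) i| ≤ (1 - Fintype.card n * ε) * ∑ i, |x i| := by
  -- since `∑ x = 0`, subtracting `ε` from every entry of `P` does not change `P *ᵥ x`
  have hshift : ∀ i, (P *ᵥ x) i = ∑ k, (P i k - ε) * x k := by
    intro i
    simp only [sub_mul, Finset.sum_sub_distrib, ← Finset.mul_sum, hx, mul_zero, sub_zero]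
    rfl
  calc ∑ i, |(P *ᵥ x) i| ≤ ∑ i, ∑ k, (P i k - ε) * |x k| := by
        refine Finset.sum_le_sum fun i _ => ?_
        rw [hshift i]
        refine (Finset.abs_sum_le_sum_abs _ _).trans_eq (Finset.sum_congr rfl fun k _ => ?_)
        rw [abs_mul, abs_of_nonneg (sub_nonneg.2 (hε i k))]
    _ = (1 - Fintype.card n * ε) * ∑ k, |x k| := by
        rw [Finset.sum_comm, Finset.mul_sum]
        refine Finset.sum_congr rfl fun k _ => ?_
        rw [← Finset.sum_mul, Finset.sum_sub_distrib, sum_col_of_mem_colStochastic hP k,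
          Finset.sum_const, Finset.card_univ, nsmul_eq_mul]

theorem exists_sum_abs_mulVec_le_mul [Nonempty n] (hP : P ∈ colStochastic ℝ n)
    (hpos : ∀ i j, 0 < P i j) :
    ∃ q < 1, 0 ≤ q ∧ ∀ x : n → ℝ, ∑ i, x i = 0 → ∑ i, |(P *ᵥ x) i| ≤ q * ∑ i, |x i| := by
  obtain ⟨ε, hε, hεpos⟩ : ∃ ε, (∀ i j, ε ≤ P i j) ∧ 0 < ε :=
    ((eventually_all.2 fun i => eventually_all.2 fun j =>
      eventually_nhdsWithin_of_eventually_nhds (eventually_le_nhds (hpos i j))).and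
      self_mem_nhdsWithin).exists (f := nhdsWithin (0 : ℝ) (Set.Ioi 0))
  obtain ⟨j⟩ := ‹Nonempty n›
  refine ⟨1 - Fintype.card n * ε,
    sub_lt_self _ (mul_pos (Nat.cast_pos.2 Fintype.card_pos) hεpos), ?_,
    fun x hx => sum_abs_mulVec_le hP hε hx⟩
  have : Fintype.card n * ε ≤ ∑ i, P i j := by
    simpa using Finset.sum_le_sum fun i (_ : i ∈ Finset.univ) => hε i j
  linarith [sum_col_of_mem_colStochastic hP j]

theorem sum_abs_pow_mulVec_le (hP : P ∈ colStochastic ℝ n) {q : ℝ} (hq : 0 ≤ q)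
    (hcontr : ∀ x : n → ℝ, ∑ i, x i = 0 → ∑ i, |(P *ᵥ x) i| ≤ q * ∑ i, |x i|)
    {x : n → ℝ} (hx : ∑ i, x i = 0) (k : ℕ) :
    ∑ i, |(P ^ k *ᵥ x) i| ≤ q ^ k * ∑ i, |x i| := by
  induction k with
  | zero => simp
  | succ k ih =>
    rw [pow_succ', ← mulVec_mulVec, pow_succ', mul_assoc]
    refine (hcontr _ ?_).trans (mul_le_mul_of_nonneg_left ih hq)
    rw [sum_mulVec_of_mem_colStochastic (pow_mem hP k), hx]

end Doeblin

section Metzler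

variable {Q : Matrix n n ℝ}

theorem exists_nonneg_add_smul_one (hQoff : ∀ i j, i ≠ j → 0 ≤ Q i j) :
    ∃ c : ℝ, ∀ i j, 0 ≤ (Q + c • 1) i j := by
  refine ⟨∑ k, |Q k k|, fun i j => ?_⟩
  rcases eq_or_ne i j with rfl | hij
  · have hle : |Q i i| ≤ ∑ k, |Q k k| :=
      Finset.single_le_sum (f := fun k => |Q k k|) (fun k _ => abs_nonneg _) (Finset.mem_univ i)
    simp only [add_apply, smul_apply, one_apply_eq, smul_eq_mul, mul_one]
    linarith [neg_abs_le (Q i i)]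
  · simpa [one_apply_ne hij] using hQoff i j hij

theorem exp_smul_apply_nonneg (hQoff : ∀ i j, i ≠ j → 0 ≤ Q i j) {s : ℝ} (hs : 0 ≤ s)
    (i j : n) : 0 ≤ exp (s • Q) i j := by
  obtain ⟨c, hc⟩ := exists_nonneg_add_smul_one hQoff
  rw [exp_smul_eq_exp_smul_add_smul_one Q s c, smul_apply, smul_eq_mul]
  exact mul_nonneg (Real.exp_nonneg _)
    (exp_apply_nonneg (fun i j => mul_nonneg hs (hc i j)) i j)

theorem exp_smul_mem_colStochastic (hQoff : ∀ i j, i ≠ j → 0 ≤ Q i j) (hQcol : 1 ᵥ* Q = 0)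
    {s : ℝ} (hs : 0 ≤ s) : exp (s • Q) ∈ colStochastic ℝ n :=
  ⟨exp_smul_apply_nonneg hQoff hs,
    vecMul_exp_of_vecMul_eq_zero (by rw [vecMul_smul, hQcol, smul_zero])⟩

theorem exists_pow_add_smul_one_apply_pos (hQoff : ∀ i j, i ≠ j → 0 ≤ Q i j)
    (hQcol : 1 ᵥ* Q = 0) (hrank : Q.rank = Fintype.card n - 1) {π : n → ℝ} (hπ : Q *ᵥ π = 0)
    (hπpos : ∀ i, 0 < π i) {c : ℝ} (hB : ∀ i j, 0 ≤ (Q + c • 1) i j) (i j : n) :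
    ∃ k, 0 < ((Q + c • 1 : Matrix n n ℝ) ^ k) i j := by
  -- the states from which `j` is reachable form a closed class `S`; restricting `π` to `S`
  -- gives a second stationary vector, which the rank condition rules out unless `i ∈ S`
  set B := Q + c • 1
  set S : Set n := {l | ∃ k, 0 < (B ^ k) l j}
  have hjS : j ∈ S := ⟨0, by simp⟩
  by_contra hiS
  change i ∉ S at hiS
  have hclosed : ∀ k ∈ S, ∀ l ∉ S, Q l k = 0 := by
    rintro k ⟨m, hm⟩ l hlS
    have hlk : l ≠ k := by rintro rfl; exact hlS ⟨m, hm⟩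
    have hBlk : B l k = Q l k := by simp [B, one_apply_ne hlk]
    refine le_antisymm (hBlk ▸ not_lt.1 fun hpos => hlS ⟨m + 1, ?_⟩) (hQoff l k hlk)
    rw [pow_succ', mul_apply]
    exact (mul_pos hpos hm).trans_le <| Finset.single_le_sum
      (fun r _ => mul_nonneg (hB l r) (pow_apply_nonneg hB m r j)) (Finset.mem_univ k)
  obtain ⟨a, ha⟩ := exists_eq_smul_of_mulVec_eq_zero hrank hπ
    (fun h => (hπpos j).ne' (congrFun h j))
    (mulVec_indicator_eq_zero hQoff hQcol hπ (fun i => (hπpos i).le) hclosed)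
  have hai : a * π i = 0 := by
    simpa [Set.indicator_of_notMem hiS] using (congrFun ha i).symm
  have haj : π j = a * π j := by
    simpa [Set.indicator_of_mem hjS] using congrFun ha j
  rcases mul_eq_zero.1 hai with rfl | hπi
  · exact (hπpos j).ne' (by simpa using haj)
  · exact (hπpos i).ne' hπi

theorem exp_smul_apply_pos (hQoff : ∀ i j, i ≠ j → 0 ≤ Q i j) (hQcol : 1 ᵥ* Q = 0)
    (hrank : Q.rank = Fintype.card n - 1) {π : n → ℝ} (hπ : Q *ᵥ π = 0) (hπpos : ∀ i, 0 < π i)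
    {s : ℝ} (hs : 0 < s) (i j : n) : 0 < exp (s • Q) i j := by
  obtain ⟨c, hc⟩ := exists_nonneg_add_smul_one hQoff
  obtain ⟨k, hk⟩ := exists_pow_add_smul_one_apply_pos hQoff hQcol hrank hπ hπpos hc i j
  rw [exp_smul_eq_exp_smul_add_smul_one Q s c, smul_apply, smul_eq_mul]
  refine mul_pos (Real.exp_pos _) (exp_apply_pos (B := s • (Q + c • 1)) (k := k)
    (fun i j => mul_nonneg hs.le (hc i j)) ?_)
  rw [smul_pow, smul_apply, smul_eq_mul]
  positivity

theorem tendsto_exp_smul_mulVec_atTop [Nonempty n] (hQoff : ∀ i j, i ≠ j → 0 ≤ Q i j)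
    (hQcol : 1 ᵥ* Q = 0) (hrank : Q.rank = Fintype.card n - 1) {π : n → ℝ} (hπ : Q *ᵥ π = 0)
    (hπpos : ∀ i, 0 < π i) {x : n → ℝ} (hx : ∑ i, x i = 0) :
    Tendsto (fun s : ℝ => exp (s • Q) *ᵥ x) atTop (𝓝 0) := by
  have hP1 : exp Q ∈ colStochastic ℝ n := by
    simpa using exp_smul_mem_colStochastic hQoff hQcol zero_le_one
  obtain ⟨q, hq1, hq0, hcontr⟩ := exists_sum_abs_mulVec_le_mul hP1
    (by simpa using exp_smul_apply_pos hQoff hQcol hrank hπ hπpos one_pos)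
  have hbound : ∀ s : ℝ, 0 ≤ s → ∑ i, |(exp (s • Q) *ᵥ x) i| ≤ q ^ ⌊s⌋₊ * ∑ i, |x i| := by
    intro s hs
    have hsplit : exp (s • Q) = exp ((s - ⌊s⌋₊) • Q) * exp Q ^ ⌊s⌋₊ := by
      rw [← exp_nsmul, ← exp_add_of_commute _ _ ((Commute.refl Q).smul_left _ |>.smul_right _),
        ← Nat.cast_smul_eq_nsmul ℝ, ← add_smul, sub_add_cancel]
    have hP := exp_smul_mem_colStochastic hQoff hQcol (sub_nonneg.2 (Nat.floor_le hs))
    have hsum : ∑ i, (exp Q ^ ⌊s⌋₊ *ᵥ x) i = 0 := by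
      rw [sum_mulVec_of_mem_colStochastic (pow_mem hP1 _), hx]
    rw [hsplit, ← mulVec_mulVec]
    calc _ ≤ (1 - Fintype.card n * 0) * ∑ i, |(exp Q ^ ⌊s⌋₊ *ᵥ x) i| :=
          sum_abs_mulVec_le hP hP.1 hsum
      _ = ∑ i, |(exp Q ^ ⌊s⌋₊ *ᵥ x) i| := by ring
      _ ≤ q ^ ⌊s⌋₊ * ∑ i, |x i| := sum_abs_pow_mulVec_le hP1 hq0 hcontr hx _
  refine tendsto_pi_nhds.2 fun i => squeeze_zero_norm'
    (a := fun s : ℝ => q ^ ⌊s⌋₊ * ∑ i, |x i|) ?_ ?_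
  · filter_upwards [eventually_ge_atTop 0] with s hs
    exact (Finset.single_le_sum (f := fun i => |(exp (s • Q) *ᵥ x) i|)
      (fun i _ => abs_nonneg _) (Finset.mem_univ i)).trans (hbound s hs)
  · simpa using ((tendsto_pow_atTop_nhds_zero_of_lt_one hq0 hq1).comp
      tendsto_nat_floor_atTop).mul_const (∑ i, |x i|)

theorem tendsto_exp_smul_atTop [Nonempty n] (hQoff : ∀ i j, i ≠ j → 0 ≤ Q i j)
    (hQcol : 1 ᵥ* Q = 0) (hrank : Q.rank = Fintype.card n - 1) {π : n → ℝ} (hπ : Q *ᵥ π = 0)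
    (hπpos : ∀ i, 0 < π i) (hπsum : ∑ i, π i = 1) :
    Tendsto (fun s : ℝ => exp (s • Q)) atTop (𝓝 (of fun i _ => π i)) := by
  refine tendsto_pi_nhds.2 fun i => tendsto_pi_nhds.2 fun j => ?_
  have hx : ∑ k, (Pi.single j 1 - π : n → ℝ) k = 0 := by simp [Finset.sum_sub_distrib, hπsum]
  have h := (tendsto_pi_nhds.1 (tendsto_exp_smul_mulVec_atTop hQoff hQcol hrank hπ hπpos hx)
    i).add_const (π i)
  rw [Pi.zero_apply, zero_add] at h
  refine h.congr fun s => ?_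
  have hstat : exp (s • Q) *ᵥ π = π :=
    exp_mulVec_of_mulVec_eq_zero (by rw [smul_mulVec, hπ, smul_zero])
  simp [mulVec_sub, hstat]

end Metzler

end Matrix

/-- Rapid switching: `exp(αtQ) → π 1ᵀ` as `α → ∞`. -/
theorem stmt_14 (d : ℕ) (hd : 1 ≤ d)
    (Q : Matrix (Fin d) (Fin d) ℝ)
    (hQoff : ∀ i j, i ≠ j → 0 ≤ Q i j)
    (hQcol : ∀ j, ∑ i, Q i j = 0)
    (hrank : Q.rank = d - 1)
    (π : Fin d → ℝ) (hπ : Q *ᵥ π = 0) (hπpos : ∀ i, 0 < π i) (hπsum : ∑ i, π i = 1)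
    (t : ℝ) (ht : 0 < t) :
    Tendsto (fun α : ℝ => exp ((α * t) • Q)) atTop
      (nhds (Matrix.of (fun i _ : Fin d => π i))) := by
  have : Nonempty (Fin d) := ⟨⟨0, hd⟩⟩
  have hQcol' : 1 ᵥ* Q = 0 := funext fun j => by simpa [vecMul, dotProduct] using hQcol j
  exact (tendsto_exp_smul_atTop hQoff hQcol' (by rwa [Fintype.card_fin]) hπ hπpos hπsum).comp
    (tendsto_id.atTop_mul_const ht)
end
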